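/- arXiv:2110.14690 — 2 statements merged into one kernel-verified Lean document; each statement's English description precedes it below -/
import Mathlib

section
/- Let U = (U_1, ..., U_d) be mutually independent random variables and define X recursively over a finite DAG G by X_i = f̃_i(X_{pa(i)}, U_i) where pa(i) is the set of parents of i. Then the joint law of X satisfies the causal Markov factorization: X_i is conditionally independent of its non-descendants given X_{pa(i)}; in particular each X_i can be written as a measurable function of (U_j)_{j ∈ an*(i)} alone. -/
/-!
Unfolding the structural equations along the (well-founded) edge relation writes `X i` as a
measurable function of `(U j)` for `j ∈ an*(i)`. If `j ≠ i` is not a descendant of `i`, then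
neither `X j` nor the parents `X_{pa(i)}` involve `U i`: they are measurable for the σ-algebra
`ℬ` generated by the `U k`, `k ≠ i`, which is independent of `σ(U i)`, while `X i` is measurable
for `σ(X_{pa(i)}) ⊔ σ(U i)`. Finally, if `𝒜` and `ℬ` are independent and `m' ≤ ℬ`, then
`m' ⊔ 𝒜` and `ℬ` are conditionally independent given `m'`.
-/

variable {V : Type*}

/-- A directed walk of length `n` from `j` to `i`. -/
def DWalk (E : V → V → Prop) : ℕ → V → V → Prop
  | 0 => fun j i => j = i
  | n + 1 => fun j i => ∃ k, E j k ∧ DWalk E n k i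

/-- Influence sets of message passing: `S_i^0 = {i}`,
`S_i^{l+1} = S_i^l ∪ ⋃_{j ∈ N_i} S_j^l`. -/
def Influence (E : V → V → Prop) : ℕ → V → Set V
  | 0, i => {i}
  | l + 1, i => Influence E l i ∪ ⋃ j ∈ {j | E j i}, Influence E l j

/-- `j` is an ancestor of `i`: there is a directed walk of positive length. -/
def Ancestor (E : V → V → Prop) (j i : V) : Prop := ∃ n, 0 < n ∧ DWalk E n j i

/-- A directed graph is acyclic (a DAG). -/
def Acyclic (E : V → V → Prop) : Prop := ∀ v, ¬ Relation.TransGen E v v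

/-- `f : Fin (n+1) → V` is a walk: consecutive vertices are joined by edges. -/
def IsWalkFun (E : V → V → Prop) (n : ℕ) (f : Fin (n + 1) → V) : Prop :=
  ∀ k : Fin n, E (f k.castSucc) (f k.succ)

/-- `f` is a directed path of length `n` from `j` to `i`. -/
def IsPathFun (E : V → V → Prop) (n : ℕ) (f : Fin (n + 1) → V) (j i : V) : Prop :=
  f 0 = j ∧ f (Fin.last n) = i ∧ IsWalkFun E n f ∧ Function.Injective f

/-- `i` together with its ancestors. -/
def anStar (E : V → V → Prop) (i : V) : Set V := insert i {j | Relation.TransGen E j i}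

open MeasureTheory MeasurableSpace ProbabilityTheory

section PiSystem

variable {Ω : Type*}

lemma isPiSystem_image2_inter (m₁ m₂ : MeasurableSpace Ω) :
    IsPiSystem (Set.image2 (· ∩ ·) {s | MeasurableSet[m₁] s} {t | MeasurableSet[m₂] t}) := by
  rintro _ ⟨s, hs, t, ht, rfl⟩ _ ⟨s', hs', t', ht', rfl⟩ -
  exact ⟨s ∩ s', hs.inter hs', t ∩ t', ht.inter ht', (Set.inter_inter_inter_comm s t s' t').symm⟩

lemma sup_eq_generateFrom_image2_inter (m₁ m₂ : MeasurableSpace Ω) :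
    m₁ ⊔ m₂ =
      generateFrom (Set.image2 (· ∩ ·) {s | MeasurableSet[m₁] s} {t | MeasurableSet[m₂] t}) := by
  refine le_antisymm (sup_le ?_ ?_) (generateFrom_le ?_)
  · exact fun s hs => measurableSet_generateFrom ⟨s, hs, Set.univ, .univ, Set.inter_univ s⟩
  · exact fun t ht => measurableSet_generateFrom ⟨Set.univ, .univ, t, ht, Set.univ_inter t⟩
  · rintro _ ⟨s, hs, t, ht, rfl⟩
    exact (le_sup_left (b := m₂) s hs).inter (le_sup_right (a := m₁) t ht)

end PiSystem

section CondIndep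

variable {Ω : Type*} {m m' 𝒜 ℬ : MeasurableSpace Ω} [mΩ : MeasurableSpace Ω]
  {μ : Measure Ω} [IsProbabilityMeasure μ]

lemma condExp_indicator_inter_eq_indicator_condExp {s A : Set Ω} (hs : MeasurableSet[m] s)
    (hA : MeasurableSet A) : μ⟦s ∩ A | m⟧ =ᵐ[μ] s.indicator (μ⟦A | m⟧) := by
  rw [← Set.indicator_indicator]
  exact condExp_indicator ((integrable_const 1).indicator hA) hs

lemma condExp_indicator_inter_eq_smul_of_indep (h𝒜 : 𝒜 ≤ mΩ) (hℬ : ℬ ≤ mΩ) (hm' : m' ≤ ℬ)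
    (hind : Indep 𝒜 ℬ μ) {t C : Set Ω} (ht : MeasurableSet[𝒜] t) (hC : MeasurableSet[ℬ] C) :
    μ⟦t ∩ C | m'⟧ =ᵐ[μ] μ.real t • μ⟦C | m'⟧ := by
  have h_const : μ⟦t | ℬ⟧ =ᵐ[μ] fun _ => μ.real t := by
    refine (condExp_indep_eq h𝒜 hℬ (stronglyMeasurable_const.indicator ht) hind).trans ?_
    exact .of_forall fun _ => integral_indicator_one (h𝒜 t ht)
  have h_pull : μ⟦C ∩ t | ℬ⟧ =ᵐ[μ] μ.real t • C.indicator (fun _ => (1 : ℝ)) := by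
    filter_upwards [condExp_indicator_inter_eq_indicator_condExp hC (h𝒜 t ht), h_const]
      with ω h₁ h₂
    by_cases hω : ω ∈ C <;> simp [h₁, h₂, hω]
  calc μ⟦t ∩ C | m'⟧ =ᵐ[μ] μ[μ⟦C ∩ t | ℬ⟧ | m'] := by
        rw [Set.inter_comm]; exact (condExp_condExp_of_le hm' hℬ).symm
    _ =ᵐ[μ] μ[μ.real t • C.indicator (fun _ => (1 : ℝ)) | m'] := condExp_congr_ae h_pull
    _ =ᵐ[μ] μ.real t • μ⟦C | m'⟧ := condExp_smul _ _ _

theorem condIndep_sup_of_indep [StandardBorelSpace Ω] (h𝒜 : 𝒜 ≤ mΩ) (hℬ : ℬ ≤ mΩ)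
    (hm' : m' ≤ ℬ) (hind : Indep 𝒜 ℬ μ) :
    CondIndep m' (m' ⊔ 𝒜) ℬ (hm'.trans hℬ) μ := by
  refine CondIndepSets.condIndep (sup_le (hm'.trans hℬ) h𝒜) hℬ (isPiSystem_image2_inter m' 𝒜)
    (@isPiSystem_measurableSet Ω ℬ) (sup_eq_generateFrom_image2_inter m' 𝒜)
    (@generateFrom_measurableSet Ω ℬ).symm ?_
  refine (condIndepSets_iff m' _ _ _ ?_ (fun B hB => hℬ B hB) μ).2 ?_
  · rintro _ ⟨s, hs, t, ht, rfl⟩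
    exact (hm'.trans hℬ s hs).inter (h𝒜 t ht)
  rintro _ B ⟨s, hs, t, ht, rfl⟩ hB
  have h_t : μ⟦t | m'⟧ =ᵐ[μ] fun _ => μ.real t := by
    have h := condExp_indicator_inter_eq_smul_of_indep h𝒜 hℬ hm' hind ht
      (MeasurableSet.univ (m := ℬ))
    rw [Set.inter_univ, Set.indicator_univ, condExp_const (hm'.trans hℬ)] at h
    exact h.trans (.of_forall fun _ => mul_one _)
  filter_upwards [condExp_indicator_inter_eq_indicator_condExp hs ((h𝒜 t ht).inter (hℬ B hB)),
    condExp_indicator_inter_eq_indicator_condExp hs (h𝒜 t ht),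
    condExp_indicator_inter_eq_smul_of_indep h𝒜 hℬ hm' hind ht hB, h_t] with ω h_stB h_st h_tB h_t
  rw [Set.inter_assoc]
  -- both sides equal `s.indicator 1 ω * μ.real t * μ⟦B | m'⟧ ω`
  by_cases hω : ω ∈ s <;> simp [h_stB, h_st, h_tB, h_t, hω]

theorem condIndepFun_of_indep [StandardBorelSpace Ω] {β β' : Type*} [mβ : MeasurableSpace β]
    [mβ' : MeasurableSpace β'] {f : Ω → β} {g : Ω → β'} (h𝒜 : 𝒜 ≤ mΩ) (hℬ : ℬ ≤ mΩ)
    (hm' : m' ≤ ℬ) (hind : Indep 𝒜 ℬ μ) (hf : mβ.comap f ≤ m' ⊔ 𝒜) (hg : mβ'.comap g ≤ ℬ)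
    (hle : m' ≤ mΩ) : CondIndepFun m' hle f g μ := by
  rw [condIndepFun_iff_condIndep]
  exact condIndep_of_condIndep_of_le_left
    (condIndep_of_condIndep_of_le_right (condIndep_sup_of_indep h𝒜 hℬ hm' hind) hg) hf

end CondIndep

section DAG

variable {E : V → V → Prop} {i j k : V}

theorem Acyclic.wellFounded [Finite V] (h : Acyclic E) : WellFounded E :=
  have : IsStrictOrder V (Relation.TransGen E) :=
    { irrefl := h, trans := fun _ _ _ => Relation.TransGen.trans }
  Subrelation.wf Relation.TransGen.single (Finite.wellFounded_of_trans_of_irrefl _)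

lemma anStar_subset_of_edge (hk : E k i) : anStar E k ⊆ anStar E i := by
  rintro j (rfl | hj)
  · exact Or.inr (.single hk)
  · exact Or.inr (.tail hj hk)

lemma Acyclic.notMem_anStar_of_edge (h : Acyclic E) (hk : E k i) : i ∉ anStar E k := by
  rintro (rfl | hi)
  · exact h i (.single hk)
  · exact h i (.tail hi hk)

lemma notMem_anStar_of_not_transGen (hji : j ≠ i) (hnd : ¬ Relation.TransGen E i j) :
    i ∉ anStar E j := by
  rintro (h | h)
  exacts [hji h.symm, hnd h]

end DAG

section StructuralEquations

variable {Ω β γ : Type*} [mβ : MeasurableSpace β] [mγ : MeasurableSpace γ] {E : V → V → Prop}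
  {U : V → Ω → γ} {f : ∀ i, ({j // E j i} → β) → γ → β} {X : V → Ω → β}

theorem exists_measurable_eq_comp_anStar (hwf : WellFounded E)
    (hf : ∀ i, Measurable (Function.uncurry (f i)))
    (hX : ∀ i ω, X i ω = f i (fun j => X j.1 ω) (U i ω)) (i : V) :
    ∃ g : ({j // j ∈ anStar E i} → γ) → β, Measurable g ∧ ∀ ω, X i ω = g fun j => U j.1 ω := by
  induction i using hwf.induction with
  | _ i ih =>
    choose g hg hXg using ih
    refine ⟨fun u => f i (fun k => g k.1 k.2 fun j => u ⟨j.1, anStar_subset_of_edge k.2 j.2⟩)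
      (u ⟨i, Set.mem_insert i _⟩), ?_, fun ω => ?_⟩
    · have := hf i
      fun_prop
    · rw [hX i ω]
      congr 1
      exact funext fun k => hXg k.1 k.2 ω

theorem measurable_iSup_comap_of_anStar_subset (hwf : WellFounded E)
    (hf : ∀ i, Measurable (Function.uncurry (f i)))
    (hX : ∀ i ω, X i ω = f i (fun j => X j.1 ω) (U i ω)) {i : V} {S : Set V}
    (hS : anStar E i ⊆ S) : Measurable[⨆ k ∈ S, mγ.comap (U k)] (X i) := by
  obtain ⟨g, hg, hXg⟩ := exists_measurable_eq_comp_anStar hwf hf hX i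
  rw [funext hXg]
  have hU : ∀ j : {j // j ∈ anStar E i}, Measurable[⨆ k ∈ S, mγ.comap (U k)] (U j.1) :=
    fun j => Measurable.of_comap_le (le_iSup₂ (f := fun k _ => mγ.comap (U k)) j.1 (hS j.2))
  fun_prop

lemma comap_le_sup_comap_parents (hf : ∀ i, Measurable (Function.uncurry (f i)))
    (hX : ∀ i ω, X i ω = f i (fun j => X j.1 ω) (U i ω)) (i : V) :
    mβ.comap (X i) ≤
      MeasurableSpace.comap (fun ω (k : {k // E k i}) => X k.1 ω) MeasurableSpace.pi ⊔
        mγ.comap (U i) := by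
  rw [funext (hX i)]
  exact ((hf i).comp ((Measurable.of_comap_le le_sup_left).prodMk
    (Measurable.of_comap_le le_sup_right))).comap_le

end StructuralEquations

theorem stmt13_general {Ω : Type*} [MeasurableSpace Ω] [StandardBorelSpace Ω]
    (μ : MeasureTheory.Measure Ω) [MeasureTheory.IsProbabilityMeasure μ]
    {d : ℕ} (E : Fin d → Fin d → Prop) (hacyc : Acyclic E)
    (U : Fin d → Ω → ℝ) (hU : ∀ i, Measurable (U i))
    (hindep : ProbabilityTheory.iIndepFun U μ)
    (ftil : ∀ i : Fin d, ({j // E j i} → ℝ) → ℝ → ℝ)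
    (hftil : ∀ i, Measurable (Function.uncurry (ftil i)))
    (X : Fin d → Ω → ℝ)
    (hX : ∀ i ω, X i ω = ftil i (fun j => X j.1 ω) (U i ω)) :
    (∀ i j : Fin d, j ≠ i → ¬ Relation.TransGen E i j →
      ∀ hle : MeasurableSpace.comap (fun ω (k : {k // E k i}) => X k.1 ω)
          MeasurableSpace.pi ≤ ‹MeasurableSpace Ω›,
        ProbabilityTheory.CondIndepFun _ hle (X i) (X j) μ) ∧
    (∀ i : Fin d, ∃ g : ({j // j ∈ anStar E i} → ℝ) → ℝ,
      Measurable g ∧ ∀ ω, X i ω = g fun j => U j.1 ω) := by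
  have hwf := hacyc.wellFounded
  refine ⟨fun i j hji hnd hle => ?_, exists_measurable_eq_comp_anStar hwf hftil hX⟩
  have hXB : ∀ {k}, i ∉ anStar E k →
      Measurable[⨆ k ∈ ({i}ᶜ : Set (Fin d)), MeasurableSpace.comap (U k) inferInstance] (X k) :=
    fun hk => measurable_iSup_comap_of_anStar_subset hwf hftil hX
      (Set.subset_compl_singleton_iff.2 hk)
  have hpa : Measurable[⨆ k ∈ ({i}ᶜ : Set (Fin d)), MeasurableSpace.comap (U k) inferInstance]
      fun ω (k : {k // E k i}) => X k.1 ω := by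
    have := fun k : {k // E k i} => hXB (hacyc.notMem_anStar_of_edge k.2)
    fun_prop
  refine condIndepFun_of_indep (hU i).comap_le (iSup₂_le fun k _ => (hU k).comap_le)
    hpa.comap_le ?_ (comap_le_sup_comap_parents hftil hX i)
    (hXB (notMem_anStar_of_not_transGen hji hnd)).comap_le hle
  simpa using indep_iSup_of_disjoint (fun k => (hU k).comap_le) hindep
    (disjoint_compl_right (a := ({i} : Set (Fin d))))

theorem stmt13 {Ω : Type*} [MeasurableSpace Ω] [StandardBorelSpace Ω] [Nonempty Ω]
    (μ : MeasureTheory.Measure Ω) [MeasureTheory.IsProbabilityMeasure μ]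
    {d : ℕ} (E : Fin d → Fin d → Prop) (hacyc : Acyclic E)
    (U : Fin d → Ω → ℝ) (hU : ∀ i, Measurable (U i))
    (hindep : ProbabilityTheory.iIndepFun U μ)
    (ftil : ∀ i : Fin d, ({j // E j i} → ℝ) → ℝ → ℝ)
    (hftil : ∀ i, Measurable (Function.uncurry (ftil i)))
    (X : Fin d → Ω → ℝ) (hXm : ∀ i, Measurable (X i))
    (hX : ∀ i ω, X i ω = ftil i (fun j => X j.1 ω) (U i ω)) :
    (∀ i j : Fin d, j ≠ i → ¬ Relation.TransGen E i j →
      ∀ hle : MeasurableSpace.comap (fun ω (k : {k // E k i}) => X k.1 ω)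
          MeasurableSpace.pi ≤ ‹MeasurableSpace Ω›,
        ProbabilityTheory.CondIndepFun _ hle (X i) (X j) μ) ∧
    (∀ i : Fin d, ∃ g : ({j // j ∈ anStar E i} → ℝ) → ℝ,
      Measurable g ∧ ∀ ω, X i ω = g fun j => U j.1 ω) :=
  stmt13_general μ E hacyc U hU hindep ftil hftil X hX
end

section
/- Intervention consistency of structural systems: let (F_i) be the solution of the recursive system X_i = f̃_i(X_{pa(i)}, U_i) over a finite DAG G, and let (F^I_i) be the solution of the intervened system where f̃_i is replaced by the constant α_i for i ∈ I (equivalently, the system over G^I). Then for any node i such that no directed path from any element of I to i exists in G (i is not a descendant of I), F^I_i = F_i, i.e., the intervention does not change variables that are not descendants of the intervened set. -/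
variable {V : Type*}

theorem stmt15 {d : ℕ} (E : Fin d → Fin d → Prop) (hacyc : Acyclic E)
    {Xty : Fin d → Type*} {Uty : Fin d → Type*}
    (I : Set (Fin d)) (α : ∀ i, Xty i)
    (ftil : ∀ i : Fin d, ((j : {j // E j i}) → Xty j.1) → Uty i → Xty i)
    (F FI : (i : Fin d) → ((j : Fin d) → Uty j) → Xty i)
    (hF : ∀ i u, F i u = ftil i (fun j => F j.1 u) (u i))
    (hFI1 : ∀ i ∈ I, ∀ u, FI i u = α i)
    (hFI2 : ∀ i ∉ I, ∀ u, FI i u = ftil i (fun j => FI j.1 u) (u i)) :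
    ∀ i : Fin d, (∀ j ∈ I, ¬ Relation.ReflTransGen E j i) →
      ∀ u, FI i u = F i u := by
  have hwf : WellFounded (Relation.TransGen E) := by
    have : IsIrrefl (Fin d) (Relation.TransGen E) := ⟨hacyc⟩
    exact Finite.wellFounded_of_trans_of_irrefl _
  intro i
  induction i using hwf.induction with
  | _ i ih =>
    intro hi u
    have hiI : i ∉ I := fun h => hi i h Relation.ReflTransGen.refl
    rw [hFI2 i hiI u, hF i u]
    congr 1
    funext j
    exact ih j.1 (Relation.TransGen.single j.2)
      (fun k hk hkj => hi k hk (hkj.tail j.2)) u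
end
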